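/- arXiv:1701.00903 — 5 statements merged into one kernel-verified Lean document; each statement's English description precedes it below -/
import Mathlib

section
/- The set of seven Allen relations is closed under composition: if r₁ and r₂ are any of the seven Allen relations and I, J, K are intervals such that r₁ holds between I and J and r₂ holds between J and K, then exactly one of the seven Allen relations holds between I and K (in particular, I precedes K). -/
/-- An interval: an ordered pair of reals with lower endpoint strictly below upper. -/
structure Itv where
  lo : ℝ
  hi : ℝ
  lt : lo < hi

/-- The seven Allen interval relations. -/
inductive AllenRel
  | before | meet | overlap | start | contain | finishedBy | equal
  deriving DecidableEq

/-- `holds r I J` : the Allen relation `r` holds between intervals `I` and `J`. -/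
def holds : AllenRel → Itv → Itv → Prop
  | .before,     I, J => I.hi < J.lo
  | .meet,       I, J => I.hi = J.lo
  | .overlap,    I, J => I.lo < J.lo ∧ J.lo < I.hi ∧ I.hi < J.hi
  | .start,      I, J => I.lo = J.lo ∧ I.hi < J.hi
  | .contain,    I, J => I.lo < J.lo ∧ J.hi < I.hi
  | .finishedBy, I, J => I.lo < J.lo ∧ I.hi = J.hi
  | .equal,      I, J => I.lo = J.lo ∧ I.hi = J.hi

/-- `I` precedes `J`. -/
def precedes (I J : Itv) : Prop :=
  I.lo < J.lo ∨ (I.lo = J.lo ∧ I.hi ≤ J.hi)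

/-- Composition of two Allen relations: the set of relations realizable between `I` and `K`
when `r₁` holds between `I` and `J` and `r₂` holds between `J` and `K`. -/
def comp (r₁ r₂ : AllenRel) : Set AllenRel :=
  {s | ∃ I J K : Itv, holds r₁ I J ∧ holds r₂ J K ∧ holds s I K}

/-- Set composition of sets of Allen relations. -/
def setComp (R₁ R₂ : Set AllenRel) : Set AllenRel :=
  ⋃ r₁ ∈ R₁, ⋃ r₂ ∈ R₂, comp r₁ r₂


/-!
Every Allen relation from `I` to `J` puts `(I.lo, I.hi)` lexicographically at or below
`(J.lo, J.hi)`, and transitivity of the lexicographic order carries this from `(I, J)` and `(J, K)`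
to `(I, K)`. Conversely, once `I` precedes `K`, comparing `I.hi` with `K.lo` and `K.hi` (only with
`K.hi` when `I.lo = K.lo`) yields exactly one of the seven relations.
-/

theorem precedes_iff_toLex_le {I J : Itv} :
    precedes I J ↔ toLex (I.lo, I.hi) ≤ toLex (J.lo, J.hi) :=
  (Prod.Lex.toLex_le_toLex (x := (I.lo, I.hi)) (y := (J.lo, J.hi))).symm

theorem precedes_trans {I J K : Itv} (hIJ : precedes I J) (hJK : precedes J K) :
    precedes I K :=
  precedes_iff_toLex_le.2 <| (precedes_iff_toLex_le.1 hIJ).trans (precedes_iff_toLex_le.1 hJK)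

theorem precedes_of_holds {r : AllenRel} {I J : Itv} (h : holds r I J) : precedes I J := by
  have := I.lt
  cases r <;> simp only [holds] at h <;> unfold precedes <;> grind

theorem exists_holds_of_precedes {I J : Itv} (h : precedes I J) : ∃ r, holds r I J := by
  have := I.lt
  rcases h with hlo | ⟨hlo, hhi⟩
  · rcases lt_trichotomy I.hi J.lo with hb | hm | hb
    · exact ⟨.before, hb⟩
    · exact ⟨.meet, hm⟩
    · rcases lt_trichotomy I.hi J.hi with hh | hh | hh
      · exact ⟨.overlap, hlo, hb, hh⟩
      · exact ⟨.finishedBy, hlo, hh⟩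
      · exact ⟨.contain, hlo, hh⟩
  · rcases hhi.lt_or_eq with hh | hh
    · exact ⟨.start, hlo, hh⟩
    · exact ⟨.equal, hlo, hh⟩

theorem holds_unique {s t : AllenRel} {I J : Itv} (hs : holds s I J) (ht : holds t I J) :
    s = t := by
  have := I.lt
  have := J.lt
  cases s <;> cases t <;> simp only [holds] at hs ht <;> first | rfl | grind

/-- Closure of the seven Allen relations under composition: if `r₁` holds between `I` and `J`
and `r₂` holds between `J` and `K`, then exactly one of the seven Allen relations holds
between `I` and `K` (in particular, `I` precedes `K`). -/
theorem allen_comp_closed (r₁ r₂ : AllenRel) (I J K : Itv)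
    (h₁ : holds r₁ I J) (h₂ : holds r₂ J K) :
    (∃! s : AllenRel, holds s I K) ∧ precedes I K := by
  have hIK : precedes I K := precedes_trans (precedes_of_holds h₁) (precedes_of_holds h₂)
  obtain ⟨s, hs⟩ := exists_holds_of_precedes hIK
  exact ⟨⟨s, hs, fun _ ht => holds_unique ht hs⟩, hIK⟩
end

section
/- The composition of 'contain' followed by 'before' is exactly the five relations {before, meet, overlap, contain, finished-by}: comp(contain, before) = {before, meet, overlap, contain, finished-by}, where each of these five relations is realized by some triple of intervals I, J, K with I containing J and J before K. -/
theorem lo_lt_lo_of_contain_before {I J K : Itv} (hIJ : holds .contain I J)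
    (hJK : holds .before J K) : I.lo < K.lo :=
  hIJ.1.trans (J.lt.trans hJK)

/-- The middle third of `[I.lo, min I.hi K.lo]` lies strictly inside `I` and strictly before `K`. -/
theorem exists_contain_before_of_lo_lt {I K : Itv} (h : I.lo < K.lo) :
    ∃ J : Itv, holds .contain I J ∧ holds .before J K := by
  set m := min I.hi K.lo
  have hm : I.lo < m := lt_min I.lt h
  have hmI : m ≤ I.hi := min_le_left _ _
  have hmK : m ≤ K.lo := min_le_right _ _
  refine ⟨⟨(2 * I.lo + m) / 3, (I.lo + 2 * m) / 3, by linarith⟩, ⟨?_, ?_⟩, ?_⟩ <;>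
    simp only [holds] <;> linarith

theorem mem_comp_contain_before_iff {s : AllenRel} :
    s ∈ comp .contain .before ↔ ∃ I K : Itv, I.lo < K.lo ∧ holds s I K := by
  constructor
  · rintro ⟨I, J, K, hIJ, hJK, hs⟩
    exact ⟨I, K, lo_lt_lo_of_contain_before hIJ hJK, hs⟩
  · rintro ⟨I, K, h, hs⟩
    obtain ⟨J, hIJ, hJK⟩ := exists_contain_before_of_lo_lt h
    exact ⟨I, J, K, hIJ, hJK, hs⟩

/-- With `K = [1, 2]` and `I = [0, b]`, the five relations arise for `b = 1/2, 1, 3/2, 3, 2`. -/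
theorem exists_lo_lt_holds_iff {s : AllenRel} :
    (∃ I K : Itv, I.lo < K.lo ∧ holds s I K) ↔
      s ∈ ({.before, .meet, .overlap, .contain, .finishedBy} : Set AllenRel) := by
  let K : Itv := ⟨1, 2, one_lt_two⟩
  cases s
  case start | equal => exact iff_of_false (fun ⟨_, _, h, hs⟩ => h.ne hs.1) (by simp)
  case before => exact iff_of_true ⟨⟨0, 1 / 2, by norm_num⟩, K, by norm_num [holds]⟩ (by simp)
  case meet => exact iff_of_true ⟨⟨0, 1, by norm_num⟩, K, by norm_num [holds]⟩ (by simp)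
  case overlap => exact iff_of_true ⟨⟨0, 3 / 2, by norm_num⟩, K, by norm_num [holds]⟩ (by simp)
  case contain => exact iff_of_true ⟨⟨0, 3, by norm_num⟩, K, by norm_num [holds]⟩ (by simp)
  case finishedBy => exact iff_of_true ⟨⟨0, 2, by norm_num⟩, K, by norm_num [holds]⟩ (by simp)

/-- `comp contain before = {before, meet, overlap, contain, finishedBy}`. -/
theorem comp_contain_before :
    comp .contain .before = {.before, .meet, .overlap, .contain, .finishedBy} := by
  ext s
  rw [mem_comp_contain_before_iff, exists_lo_lt_holds_iff]
end

section
/- Composition of Allen relations over the reals is exact (strong composition): for Allen relations r₁, r₂, s with s ∈ comp(r₁, r₂), and for ANY intervals I and K such that s holds between I and K, there exists an interval J such that r₁ holds between I and J and r₂ holds between J and K. -/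
/-!
Strictly increasing self-maps of `ℝ` preserve every Allen relation, and the relation holding
between `I` and `K` fixes the order type of the four endpoints `I⁻, I⁺, K⁻, K⁺`. So if
`I₀, J₀, K₀` witness `s ∈ comp r₁ r₂`, piecewise-linear interpolation gives a strictly
increasing map sending the endpoints of `I₀, K₀` to those of `I, K`, and it carries `J₀` to
the required `J`.
-/

section StrictMonoInterpolation

variable {𝕜 : Type*} [Field 𝕜] [LinearOrder 𝕜] [IsStrictOrderedRing 𝕜]

theorem strictMono_affine {a b c : 𝕜} (hc : 0 < c) : StrictMono fun t ↦ b + (t - a) * c :=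
  fun _ _ h ↦ by simp only [add_lt_add_iff_left]; gcongr

theorem StrictMono.exists_eqOn_Iic_apply_eq {f : 𝕜 → 𝕜} (hf : StrictMono f) {a c d : 𝕜}
    (hac : a < c) (hd : f a < d) :
    ∃ g : 𝕜 → 𝕜, StrictMono g ∧ Set.EqOn g f (Set.Iic a) ∧ g c = d := by
  have hslope : 0 < (d - f a) / (c - a) := div_pos (sub_pos.2 hd) (sub_pos.2 hac)
  refine ⟨fun t ↦ if t ≤ a then f t else f a + (t - a) * ((d - f a) / (c - a)),
    hf.ite' (strictMono_affine hslope) (fun _ _ h hy ↦ h.le.trans hy) fun u v hu hv _ ↦ ?_,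
    fun t ht ↦ if_pos ht, ?_⟩
  · exact (hf.monotone hu).trans_lt
      (lt_add_of_pos_right _ (mul_pos (sub_pos.2 (not_le.1 hv)) hslope))
  · simp only [if_neg hac.not_ge]
    field_simp [(sub_pos.2 hac).ne']
    ring

theorem exists_strictMono_comp_eq {ι : Type*} [Finite ι] {x y : ι → 𝕜}
    (h : ∀ i j, x i < x j ↔ y i < y j) : ∃ f : 𝕜 → 𝕜, StrictMono f ∧ f ∘ x = y := by
  classical
  cases nonempty_fintype ι
  have heq : ∀ i j, x i = x j → y i = y j := fun i j hij ↦
    le_antisymm (not_lt.1 fun hlt ↦ ((h j i).2 hlt).ne' hij)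
      (not_lt.1 fun hlt ↦ ((h i j).2 hlt).ne hij)
  suffices ∀ s : Finset ι, ∃ f : 𝕜 → 𝕜, StrictMono f ∧ ∀ i ∈ s, f (x i) = y i by
    obtain ⟨f, hf, hfxy⟩ := this Finset.univ
    exact ⟨f, hf, funext fun i ↦ hfxy i (Finset.mem_univ i)⟩
  intro s
  induction s using Finset.induction_on_max_value x with
  | empty => exact ⟨id, strictMono_id, by simp⟩
  | insert a s _ hmax ih =>
    obtain ⟨f, hf, hfs⟩ := ih
    rcases s.eq_empty_or_nonempty with rfl | hs
    · exact ⟨fun t ↦ t - x a + y a, fun _ _ h ↦ by simpa using h, by simp⟩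
    obtain ⟨j, hj, hjmax⟩ := s.exists_max_image x hs
    rcases (hmax j hj).eq_or_lt with hja | hja
    · refine ⟨f, hf, (Finset.forall_mem_insert _ _ _).2 ⟨?_, hfs⟩⟩
      rw [← hja, hfs j hj, heq j a hja]
    · obtain ⟨g, hg, hgf, hga⟩ :=
        hf.exists_eqOn_Iic_apply_eq hja (d := y a) (by rw [hfs j hj]; exact (h j a).1 hja)
      refine ⟨g, hg, (Finset.forall_mem_insert _ _ _).2 ⟨hga, fun i hi ↦ ?_⟩⟩
      rw [hgf (hjmax i hi), hfs i hi]

end StrictMonoInterpolation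

theorem Itv.ext {I J : Itv} (hlo : I.lo = J.lo) (hhi : I.hi = J.hi) : I = J := by
  cases I; cases J; congr

def Itv.map (f : ℝ → ℝ) (hf : StrictMono f) (I : Itv) : Itv :=
  ⟨f I.lo, f I.hi, hf I.lt⟩

theorem holds_map {f : ℝ → ℝ} (hf : StrictMono f) {r : AllenRel} {I J : Itv}
    (h : holds r I J) : holds r (I.map f hf) (J.map f hf) := by
  cases r with
  | before => exact hf h
  | meet => exact congrArg f h
  | overlap => exact ⟨hf h.1, hf h.2.1, hf h.2.2⟩
  | start => exact ⟨congrArg f h.1, hf h.2⟩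
  | contain => exact ⟨hf h.1, hf h.2⟩
  | finishedBy => exact ⟨hf h.1, congrArg f h.2⟩
  | equal => exact ⟨congrArg f h.1, congrArg f h.2⟩

def endpoints (I K : Itv) : Fin 4 → ℝ := ![I.lo, I.hi, K.lo, K.hi]

theorem endpoints_lt_iff_of_holds {s : AllenRel} {I K I' K' : Itv} (h : holds s I K)
    (h' : holds s I' K') (i j : Fin 4) :
    endpoints I K i < endpoints I K j ↔ endpoints I' K' i < endpoints I' K' j := by
  have := I.lt; have := K.lt; have := I'.lt; have := K'.lt
  cases s <;> simp only [holds] at h h' <;> fin_cases i <;> fin_cases j <;>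
    simp only [endpoints, Fin.reduceFinMk, Matrix.cons_val] <;> constructor <;> intro <;>
    linarith

theorem exists_strictMono_map_eq_of_holds {s : AllenRel} {I₀ K₀ I K : Itv}
    (h₀ : holds s I₀ K₀) (h : holds s I K) :
    ∃ (f : ℝ → ℝ) (hf : StrictMono f), I₀.map f hf = I ∧ K₀.map f hf = K := by
  obtain ⟨f, hf, hfx⟩ := exists_strictMono_comp_eq (endpoints_lt_iff_of_holds h₀ h)
  exact ⟨f, hf, Itv.ext (congrFun hfx 0) (congrFun hfx 1),
    Itv.ext (congrFun hfx 2) (congrFun hfx 3)⟩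

/-- Strong (exact) composition over the reals: if `s ∈ comp r₁ r₂` then for ANY intervals
`I`, `K` with `s` holding between them, there is an intermediate interval `J`. -/
theorem allen_strong_composition (r₁ r₂ s : AllenRel) (hs : s ∈ comp r₁ r₂)
    (I K : Itv) (h : holds s I K) :
    ∃ J : Itv, holds r₁ I J ∧ holds r₂ J K := by
  obtain ⟨I₀, J₀, K₀, hIJ, hJK, hIK⟩ := hs
  obtain ⟨f, hf, rfl, rfl⟩ := exists_strictMono_map_eq_of_holds hIK h
  exact ⟨J₀.map f hf, holds_map hf hIJ, holds_map hf hJK⟩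
end

section
/- (Path consistency) Let n ≥ 2 and suppose an Allen relation r_{i,j} is assigned to every pair of indices 1 ≤ i < j ≤ n such that for all i < j < k one has r_{i,k} ∈ comp(r_{i,j}, r_{j,k}). Then for every strictly increasing sequence of indices n₀ < n₁ < ⋯ < n_m (m ≥ 1) in {1, …, n}, one has r_{n₀,n_m} ∈ {r_{n₀,n₁}} ∘ {r_{n₁,n₂}} ∘ ⋯ ∘ {r_{n_{m−1},n_m}}, where ∘ denotes set composition of sets of Allen relations applied left-associatively. -/
/-- Left-associative composite `{r 1} ∘ {r 2} ∘ ⋯ ∘ {r m}` of a sequence of Allen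
relations (indexed from 1). -/
def pathComp (r : ℕ → AllenRel) : ℕ → Set AllenRel
  | 0 => ∅
  | 1 => {r 1}
  | (m + 2) => setComp (pathComp r (m + 1)) {r (m + 2)}

/-!
Induct along the path: if `r_{n₀,n_k}` lies in the composite of the first `k` edges, the
triangle `n₀ < n_k < n_{k+1}` puts `r_{n₀,n_{k+1}}` in `comp r_{n₀,n_k} r_{n_k,n_{k+1}}`, which is
contained in the composite of the first `k + 1` edges.
-/

theorem mem_setComp_singleton {R : Set AllenRel} {r s t : AllenRel} (hs : s ∈ R)
    (ht : t ∈ comp s r) : t ∈ setComp R {r} :=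
  Set.mem_biUnion hs (Set.mem_biUnion rfl ht)

theorem mem_pathComp_of_triangles (ρ : ℕ → ℕ → AllenRel) (m : ℕ)
    (htri : ∀ k, 1 ≤ k → k ≤ m → ρ 0 (k + 1) ∈ comp (ρ 0 k) (ρ k (k + 1))) :
    ρ 0 (m + 1) ∈ pathComp (fun j => ρ (j - 1) j) (m + 1) := by
  induction m with
  | zero => exact Set.mem_singleton _
  | succ m ih =>
    have hprefix := ih fun k hk hkm => htri k hk (hkm.trans m.le_succ)
    exact mem_setComp_singleton hprefix (htri (m + 1) m.succ_pos le_rfl)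

theorem path_consistency_general (n : ℕ) (r : ℕ → ℕ → AllenRel)
    (hcons : ∀ i j k, 1 ≤ i → i < j → j < k → k ≤ n → r i k ∈ comp (r i j) (r j k))
    (m : ℕ) (hm : 1 ≤ m) (ns : ℕ → ℕ)
    (hmono : ∀ a b, a < b → b ≤ m → ns a < ns b)
    (hlo : 1 ≤ ns 0) (hhi : ns m ≤ n) :
    r (ns 0) (ns m) ∈ pathComp (fun j => r (ns (j - 1)) (ns j)) m := by
  have hbound : ∀ a ≤ m, ns a ≤ n := fun a ha =>
    ha.lt_or_eq.elim (fun h => (hmono a m h le_rfl).le.trans hhi) (fun h => h ▸ hhi)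
  obtain ⟨m, rfl⟩ := Nat.exists_eq_add_of_le' hm
  refine mem_pathComp_of_triangles (fun a b => r (ns a) (ns b)) m fun k hk hkm => ?_
  exact hcons _ _ _ hlo (hmono 0 k hk (hkm.trans m.le_succ))
    (hmono k (k + 1) k.lt_succ_self (Nat.succ_le_succ hkm)) (hbound _ (Nat.succ_le_succ hkm))

/-- Path consistency: if every triangle is consistent, then every increasing path is
consistent. -/
theorem path_consistency (n : ℕ) (hn : 2 ≤ n) (r : ℕ → ℕ → AllenRel)
    (hcons : ∀ i j k, 1 ≤ i → i < j → j < k → k ≤ n → r i k ∈ comp (r i j) (r j k))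
    (m : ℕ) (hm : 1 ≤ m) (ns : ℕ → ℕ)
    (hmono : ∀ a b, a < b → b ≤ m → ns a < ns b)
    (hlo : 1 ≤ ns 0) (hhi : ns m ≤ n) :
    r (ns 0) (ns m) ∈ pathComp (fun j => r (ns (j - 1)) (ns j)) m :=
  path_consistency_general n r hcons m hm ns hmono hlo hhi
end

section
/- (Dirichlet normalization used in the Gibbs-sampling marginalization) Let n ≥ 1, let a : Fin n → ℝ with a_i > 0 for all i, and let a₀ > 0. Then the Lebesgue integral over the open simplex Δ = {x : Fin n → ℝ | x_i > 0 for all i and ∑_i x_i < 1} of the function x ↦ (∏_i x_i^{a_i − 1}) · (1 − ∑_i x_i)^{a₀ − 1} equals (∏_i Γ(a_i)) · Γ(a₀) / Γ(a₀ + ∑_i a_i). -/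
/-!
Integrate out the first coordinate and induct on `n`. Over a point `y` of the `n`-simplex, the
fibre of the `(n + 1)`-simplex is `{Fin.cons t y | 0 < t < c}` with `c = 1 - ∑ i, y i`, and the
scaled Beta integral `∫₀ᶜ t ^ (u - 1) * (c - t) ^ (v - 1) dt = c ^ (u + v - 1) * B(u, v)` turns the
kernel with exponents `(a, a₀)` into `B(a 0, a₀)` times the kernel with exponents
`(Fin.tail a, a 0 + a₀)`; the Gamma factors then telescope. The integrand is nonnegative, so the
whole computation runs through `lintegral`, where Tonelli needs no integrability.
-/

open MeasureTheory Set ProbabilityTheory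
open scoped ENNReal

theorem lintegral_Ioo_rpow_mul_one_sub_rpow {u v : ℝ} (hu : 0 < u) (hv : 0 < v) :
    ∫⁻ s in Ioo 0 1, ENNReal.ofReal (s ^ (u - 1) * (1 - s) ^ (v - 1)) =
      ENNReal.ofReal (beta u v) := by
  have hB := beta_pos hu hv
  have h := lintegral_betaPDF_eq_one hu hv
  simp_rw [lintegral_betaPDF, mul_assoc, ENNReal.ofReal_mul (one_div_pos.2 hB).le] at h
  rw [lintegral_const_mul' _ _ ENNReal.ofReal_ne_top] at h
  calc _ = ENNReal.ofReal (beta u v * (1 / beta u v)) *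
        ∫⁻ s in Ioo 0 1, ENNReal.ofReal (s ^ (u - 1) * (1 - s) ^ (v - 1)) := by
        rw [mul_one_div_cancel hB.ne', ENNReal.ofReal_one, one_mul]
    _ = _ := by rw [ENNReal.ofReal_mul hB.le, mul_assoc, h, mul_one]

theorem lintegral_Ioo_rpow_mul_sub_rpow {u v c : ℝ} (hu : 0 < u) (hv : 0 < v) (hc : 0 < c) :
    ∫⁻ t in Ioo 0 c, ENNReal.ofReal (t ^ (u - 1) * (c - t) ^ (v - 1)) =
      ENNReal.ofReal (c ^ (u + v - 1) * beta u v) := by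
  have hscale : ∀ s ∈ Ioo (0 : ℝ) 1,
      ENNReal.ofReal |c| * ENNReal.ofReal ((c * s) ^ (u - 1) * (c - c * s) ^ (v - 1)) =
        ENNReal.ofReal (c ^ (u + v - 1)) * ENNReal.ofReal (s ^ (u - 1) * (1 - s) ^ (v - 1)) := by
    rintro s ⟨hs₀, hs₁⟩
    rw [← ENNReal.ofReal_mul (abs_nonneg c), ← ENNReal.ofReal_mul (by positivity),
      abs_of_pos hc, ← mul_one_sub, Real.mul_rpow hc.le hs₀.le,
      Real.mul_rpow hc.le (sub_nonneg.2 hs₁.le)]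
    congr 1
    rw [show u + v - 1 = 1 + (u - 1) + (v - 1) by ring, Real.rpow_add hc, Real.rpow_add hc,
      Real.rpow_one]
    ring
  have hmap := lintegral_image_eq_lintegral_abs_deriv_mul (measurableSet_Ioo (a := 0) (b := 1))
    (fun s _ => ((hasDerivAt_id s).const_mul c).hasDerivWithinAt)
    (mul_right_injective₀ hc.ne').injOn
    (fun t => ENNReal.ofReal (t ^ (u - 1) * (c - t) ^ (v - 1)))
  simp only [id, mul_one, image_mul_left_Ioo hc, mul_zero] at hmap
  rw [hmap, setLIntegral_congr_fun measurableSet_Ioo hscale,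
    lintegral_const_mul' _ _ ENNReal.ofReal_ne_top, lintegral_Ioo_rpow_mul_one_sub_rpow hu hv,
    ← ENNReal.ofReal_mul (by positivity)]

theorem lintegral_fin_cons {α : Type*} [MeasureSpace α] [SigmaFinite (volume : Measure α)]
    {n : ℕ} {f : (Fin (n + 1) → α) → ℝ≥0∞} (hf : Measurable f) :
    ∫⁻ x, f x = ∫⁻ y : Fin n → α, ∫⁻ t, f (Fin.cons t y) := by
  have he := (volume_preserving_piFinSuccAbove (fun _ : Fin (n + 1) => α) 0).symm
  rw [← he.lintegral_comp hf, Measure.volume_eq_prod, lintegral_prod_symm _ ?_]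
  · simp [MeasurableEquiv.piFinSuccAbove_symm_apply, Fin.insertNthEquiv, Fin.insertNth_zero']
  · exact (hf.comp (MeasurableEquiv.measurable _)).aemeasurable

def openSimplex (n : ℕ) : Set (Fin n → ℝ) := {x | (∀ i, 0 < x i) ∧ ∑ i, x i < 1}

theorem measurableSet_openSimplex (n : ℕ) : MeasurableSet (openSimplex n) := by
  unfold openSimplex
  simp only [ofPred_and, ofPred_forall]
  exact (MeasurableSet.iInter fun i => measurableSet_lt measurable_const (by fun_prop)).inter
    (measurableSet_lt (by fun_prop) measurable_const)

theorem openSimplex_zero : openSimplex 0 = univ := by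
  simp [openSimplex]

theorem cons_mem_openSimplex_iff {n : ℕ} {t : ℝ} {y : Fin n → ℝ} :
    (Fin.cons t y : Fin (n + 1) → ℝ) ∈ openSimplex (n + 1) ↔
      y ∈ openSimplex n ∧ t ∈ Ioo 0 (1 - ∑ i, y i) := by
  simp only [openSimplex, mem_ofPred_eq, Fin.forall_fin_succ, Fin.cons_zero, Fin.cons_succ,
    Fin.sum_univ_succ, mem_Ioo]
  constructor
  · rintro ⟨⟨ht, hy⟩, hsum⟩; exact ⟨⟨hy, by linarith⟩, ht, by linarith⟩
  · rintro ⟨⟨hy, -⟩, ht, hsum⟩; exact ⟨⟨ht, hy⟩, by linarith⟩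

noncomputable def dirichletKernel {n : ℕ} (a : Fin n → ℝ) (a₀ : ℝ) (x : Fin n → ℝ) : ℝ :=
  (∏ i, x i ^ (a i - 1)) * (1 - ∑ i, x i) ^ (a₀ - 1)

theorem measurable_dirichletKernel {n : ℕ} (a : Fin n → ℝ) (a₀ : ℝ) :
    Measurable (dirichletKernel a a₀) := by
  unfold dirichletKernel; fun_prop

theorem dirichletKernel_nonneg {n : ℕ} (a : Fin n → ℝ) (a₀ : ℝ) {x : Fin n → ℝ}
    (hx : x ∈ openSimplex n) : 0 ≤ dirichletKernel a a₀ x :=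
  mul_nonneg (Finset.prod_nonneg fun i _ => Real.rpow_nonneg (hx.1 i).le _)
    (Real.rpow_nonneg (by linarith [hx.2]) _)

theorem dirichletKernel_cons {n : ℕ} (a : Fin (n + 1) → ℝ) (a₀ t : ℝ) (y : Fin n → ℝ) :
    dirichletKernel a a₀ (Fin.cons t y) =
      (∏ i, y i ^ (a i.succ - 1)) * (t ^ (a 0 - 1) * ((1 - ∑ i, y i) - t) ^ (a₀ - 1)) := by
  simp only [dirichletKernel, Fin.prod_univ_succ, Fin.sum_univ_succ, Fin.cons_zero,
    Fin.cons_succ, sub_add_eq_sub_sub_swap]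
  ring

theorem lintegral_dirichletKernel_cons {n : ℕ} {a : Fin (n + 1) → ℝ} {a₀ : ℝ} (ha : 0 < a 0)
    (ha₀ : 0 < a₀) {y : Fin n → ℝ} (hy : y ∈ openSimplex n) :
    ∫⁻ t in Ioo 0 (1 - ∑ i, y i), ENNReal.ofReal (dirichletKernel a a₀ (Fin.cons t y)) =
      ENNReal.ofReal (beta (a 0) a₀ * dirichletKernel (Fin.tail a) (a 0 + a₀) y) := by
  have hprod : 0 ≤ ∏ i, y i ^ (a i.succ - 1) :=
    Finset.prod_nonneg fun i _ => Real.rpow_nonneg (hy.1 i).le _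
  simp_rw [dirichletKernel_cons, ENNReal.ofReal_mul hprod]
  rw [lintegral_const_mul' _ _ ENNReal.ofReal_ne_top,
    lintegral_Ioo_rpow_mul_sub_rpow ha ha₀ (sub_pos.2 hy.2), ← ENNReal.ofReal_mul hprod]
  simp only [dirichletKernel, Fin.tail]
  congr 1
  ring

theorem lintegral_indicator_openSimplex_cons {n : ℕ} (g : (Fin (n + 1) → ℝ) → ℝ≥0∞)
    (y : Fin n → ℝ) :
    ∫⁻ t, (openSimplex (n + 1)).indicator g (Fin.cons t y) =
      (openSimplex n).indicator (fun y => ∫⁻ t in Ioo 0 (1 - ∑ i, y i), g (Fin.cons t y)) y := by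
  by_cases hy : y ∈ openSimplex n
  · rw [indicator_of_mem hy, ← lintegral_indicator measurableSet_Ioo]
    congr 1 with t
    simp only [indicator, cons_mem_openSimplex_iff, hy, true_and]
  · simp [indicator, cons_mem_openSimplex_iff, hy]

noncomputable def multiBeta {n : ℕ} (a : Fin n → ℝ) (a₀ : ℝ) : ℝ :=
  (∏ i, Real.Gamma (a i)) * Real.Gamma a₀ / Real.Gamma (a₀ + ∑ i, a i)

theorem multiBeta_fin_zero (a : Fin 0 → ℝ) {a₀ : ℝ} (ha₀ : Real.Gamma a₀ ≠ 0) :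
    multiBeta a a₀ = 1 := by
  simp [multiBeta, ha₀]

theorem multiBeta_succ {n : ℕ} (a : Fin (n + 1) → ℝ) {a₀ : ℝ} (h : 0 < a 0 + a₀) :
    multiBeta a a₀ = beta (a 0) a₀ * multiBeta (Fin.tail a) (a 0 + a₀) := by
  have hΓ := (Real.Gamma_pos_of_pos h).ne'
  simp only [multiBeta, beta, Fin.prod_univ_succ, Fin.sum_univ_succ, Fin.tail, ← add_assoc,
    add_comm a₀ (a 0)]
  field_simp

theorem multiBeta_pos {n : ℕ} {a : Fin n → ℝ} {a₀ : ℝ} (ha : ∀ i, 0 < a i) (ha₀ : 0 < a₀) :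
    0 < multiBeta a a₀ :=
  div_pos (mul_pos (Finset.prod_pos fun i _ => Real.Gamma_pos_of_pos (ha i))
    (Real.Gamma_pos_of_pos ha₀))
    (Real.Gamma_pos_of_pos (add_pos_of_pos_of_nonneg ha₀ (Finset.sum_nonneg fun i _ => (ha i).le)))

theorem lintegral_openSimplex_dirichletKernel {n : ℕ} {a : Fin n → ℝ} {a₀ : ℝ}
    (ha : ∀ i, 0 < a i) (ha₀ : 0 < a₀) :
    ∫⁻ x in openSimplex n, ENNReal.ofReal (dirichletKernel a a₀ x) =
      ENNReal.ofReal (multiBeta a a₀) := by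
  induction n generalizing a₀ with
  | zero =>
    simp [openSimplex_zero, dirichletKernel, multiBeta_fin_zero a (Real.Gamma_pos_of_pos ha₀).ne',
      volume_pi, Measure.pi_empty_univ]
  | succ n ih =>
    have hmeas := (measurable_dirichletKernel a a₀).ennreal_ofReal.indicator
      (measurableSet_openSimplex (n + 1))
    rw [← lintegral_indicator (measurableSet_openSimplex _), lintegral_fin_cons hmeas]
    simp_rw [lintegral_indicator_openSimplex_cons]
    rw [lintegral_indicator (measurableSet_openSimplex n),
      setLIntegral_congr_fun (measurableSet_openSimplex n)
        fun y hy => lintegral_dirichletKernel_cons (ha 0) ha₀ hy]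
    simp_rw [ENNReal.ofReal_mul (beta_pos (ha 0) ha₀).le]
    rw [lintegral_const_mul _ (measurable_dirichletKernel _ _).ennreal_ofReal,
      ih (a := Fin.tail a) (fun i => ha i.succ) (add_pos (ha 0) ha₀),
      ← ENNReal.ofReal_mul (beta_pos (ha 0) ha₀).le, ← multiBeta_succ a (add_pos (ha 0) ha₀)]

theorem integral_openSimplex_dirichletKernel {n : ℕ} {a : Fin n → ℝ} {a₀ : ℝ}
    (ha : ∀ i, 0 < a i) (ha₀ : 0 < a₀) :
    ∫ x in openSimplex n, dirichletKernel a a₀ x = multiBeta a a₀ := by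
  have hnonneg : 0 ≤ᵐ[volume.restrict (openSimplex n)] dirichletKernel a a₀ :=
    ae_restrict_of_forall_mem (measurableSet_openSimplex n) fun _ => dirichletKernel_nonneg a a₀
  rw [integral_eq_lintegral_of_nonneg_ae hnonneg
      (measurable_dirichletKernel a a₀).aestronglyMeasurable,
    lintegral_openSimplex_dirichletKernel ha ha₀, ENNReal.toReal_ofReal (multiBeta_pos ha ha₀).le]

theorem dirichlet_normalization_general (n : ℕ)
    (a : Fin n → ℝ) (ha : ∀ i, 0 < a i) (a₀ : ℝ) (ha₀ : 0 < a₀) :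
    ∫ x in {x : Fin n → ℝ | (∀ i, 0 < x i) ∧ ∑ i, x i < 1},
        (∏ i, x i ^ (a i - 1)) * (1 - ∑ i, x i) ^ (a₀ - 1) =
      (∏ i, Real.Gamma (a i)) * Real.Gamma a₀ / Real.Gamma (a₀ + ∑ i, a i) :=
  integral_openSimplex_dirichletKernel ha ha₀

/-- Dirichlet normalization constant: the integral over the open standard simplex of
`(∏ i, x i ^ (a i - 1)) * (1 - ∑ i, x i) ^ (a₀ - 1)` equals
`(∏ i, Γ (a i)) * Γ a₀ / Γ (a₀ + ∑ i, a i)`. -/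
theorem dirichlet_normalization (n : ℕ) (hn : 1 ≤ n)
    (a : Fin n → ℝ) (ha : ∀ i, 0 < a i) (a₀ : ℝ) (ha₀ : 0 < a₀) :
    ∫ x in {x : Fin n → ℝ | (∀ i, 0 < x i) ∧ ∑ i, x i < 1},
        (∏ i, x i ^ (a i - 1)) * (1 - ∑ i, x i) ^ (a₀ - 1) =
      (∏ i, Real.Gamma (a i)) * Real.Gamma a₀ / Real.Gamma (a₀ + ∑ i, a i) :=
  dirichlet_normalization_general n a ha a₀ ha₀
end
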